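/- For a 2D one-neuron network f(x1,x2) = w2 * σ(a1*x1 + a2*x2 + b1) + b2 with a1, a2 ≠ 0, the integral over [-1,1]² equals 4*w2 + 4*b2 + (w2/(a1*a2)) * [Li₂(-e^{a1+a2-b1}) - Li₂(-e^{a1-a2-b1}) - Li₂(-e^{-a1+a2-b1}) + Li₂(-e^{-a1-a2-b1})]. -/

import Mathlib

/-!
On `[-1,1]²` integrate first in `x₂`: an antiderivative of `σ` is `z ↦ z + log (1 + e^{-z})`,
and an antiderivative of `z ↦ log (1 + e^{-z})` is `z ↦ Li₂(-e^{-z})`, so the inner integral is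
affine in `x₁` plus a difference of two such logarithms, and the outer integral produces the four
dilogarithms at the corners of the square.
-/

/-- The real dilogarithm, defined for nonpositive arguments by
`Li₂(x) = -∫₀ˣ log(1-u)/u du`. -/
noncomputable def Li2 (x : ℝ) : ℝ := -∫ u in (0 : ℝ)..x, Real.log (1 - u) / u

/-- The logistic sigmoid. -/
noncomputable def sigmoid (z : ℝ) : ℝ := 1 / (1 + Real.exp (-z))

lemma sigmoid_eq_real_sigmoid : sigmoid = Real.sigmoid := by
  funext z
  rw [sigmoid, Real.sigmoid_def, one_div]

lemma norm_log_one_sub_div_le_one {u : ℝ} (hu : u ≤ 0) : ‖Real.log (1 - u) / u‖ ≤ 1 := by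
  rcases hu.eq_or_lt with rfl | hu
  · norm_num
  have hlog_nonneg : 0 ≤ Real.log (1 - u) := Real.log_nonneg (by linarith)
  have hlog_le : Real.log (1 - u) ≤ -u := by
    linarith [Real.log_le_sub_one_of_pos (x := 1 - u) (by linarith)]
  rw [Real.norm_eq_abs, abs_le, le_div_iff_of_neg hu]
  exact ⟨by linarith, (div_nonpos_of_nonneg_of_nonpos hlog_nonneg hu.le).trans zero_le_one⟩

lemma measurable_log_one_sub_div : Measurable fun u : ℝ => Real.log (1 - u) / u :=
  (Real.measurable_log.comp (measurable_const.sub measurable_id)).div measurable_id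

lemma intervalIntegrable_log_one_sub_div {x : ℝ} (hx : x ≤ 0) :
    IntervalIntegrable (fun u : ℝ => Real.log (1 - u) / u) MeasureTheory.volume 0 x := by
  rw [intervalIntegrable_iff, Set.uIoc_of_ge hx]
  refine MeasureTheory.Measure.integrableOn_of_bounded (M := 1) measure_Ioc_lt_top.ne
    measurable_log_one_sub_div.aestronglyMeasurable ?_
  exact MeasureTheory.ae_restrict_of_forall_mem measurableSet_Ioc fun u hu =>
    norm_log_one_sub_div_le_one hu.2

lemma hasDerivAt_Li2 {x : ℝ} (hx : x < 0) :
    HasDerivAt Li2 (-(Real.log (1 - x) / x)) x := by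
  have hcont : ContinuousAt (fun u : ℝ => Real.log (1 - u) / u) x :=
    ((Real.continuousAt_log (by linarith)).comp (by fun_prop)).div continuousAt_id hx.ne
  exact (intervalIntegral.integral_hasDerivAt_right (intervalIntegrable_log_one_sub_div hx.le)
    measurable_log_one_sub_div.aestronglyMeasurable.stronglyMeasurableAtFilter hcont).neg

lemma hasDerivAt_Li2_neg_exp_neg (z : ℝ) :
    HasDerivAt (fun z => Li2 (-Real.exp (-z))) (Real.log (1 + Real.exp (-z))) z := by
  have hexp : HasDerivAt (fun z => -Real.exp (-z)) (Real.exp (-z)) z :=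
    (hasDerivAt_neg z).exp.neg.congr_deriv (by ring)
  refine ((hasDerivAt_Li2 (neg_lt_zero.mpr (Real.exp_pos (-z)))).comp z hexp).congr_deriv ?_
  rw [sub_neg_eq_add, div_neg, neg_neg, div_mul_cancel₀ _ (Real.exp_pos (-z)).ne']

lemma hasDerivAt_add_log_one_add_exp_neg (z : ℝ) :
    HasDerivAt (fun z => z + Real.log (1 + Real.exp (-z))) (sigmoid z) z := by
  have hpos : 0 < 1 + Real.exp (-z) := by positivity
  have hexp : HasDerivAt (fun z => 1 + Real.exp (-z)) (-Real.exp (-z)) z :=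
    (hasDerivAt_neg z).exp.const_add 1 |>.congr_deriv (by ring)
  refine ((hasDerivAt_id z).add (hexp.log hpos.ne')).congr_deriv ?_
  rw [sigmoid]
  field_simp
  ring

lemma continuous_log_one_add_exp_neg : Continuous fun z : ℝ => Real.log (1 + Real.exp (-z)) :=
  (continuous_const.add (Real.continuous_exp.comp continuous_neg)).log fun z =>
    (show 0 < 1 + Real.exp (-z) by positivity).ne'

lemma integral_comp_mul_add_eq_of_hasDerivAt {F f : ℝ → ℝ} (hF : ∀ z, HasDerivAt F (f z) z)
    (hf : Continuous f) {a : ℝ} (ha : a ≠ 0) (c s t : ℝ) :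
    ∫ x in s..t, f (a * x + c) = (F (a * t + c) - F (a * s + c)) / a := by
  rw [intervalIntegral.integral_comp_mul_add _ ha,
    intervalIntegral.integral_eq_sub_of_hasDerivAt (fun z _ => hF z) (hf.intervalIntegrable _ _),
    smul_eq_mul, inv_mul_eq_div]

lemma integral_neuron_comp_mul_add (w b : ℝ) {a : ℝ} (ha : a ≠ 0) (c : ℝ) :
    ∫ x in (-1 : ℝ)..1, (w * sigmoid (a * x + c) + b)
      = 2 * w + 2 * b + w / a *
        (Real.log (1 + Real.exp (-(a + c))) - Real.log (1 + Real.exp (-(-a + c)))) := by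
  have hF (z : ℝ) : HasDerivAt (fun z => w * (z + Real.log (1 + Real.exp (-z))) + b * z)
      (w * sigmoid z + b) z :=
    ((hasDerivAt_add_log_one_add_exp_neg z).const_mul w).add
      ((hasDerivAt_id z).const_mul b |>.congr_deriv (mul_one b))
  have hf : Continuous fun z => w * sigmoid z + b := by
    rw [sigmoid_eq_real_sigmoid]
    fun_prop
  rw [integral_comp_mul_add_eq_of_hasDerivAt hF hf ha, mul_one, mul_neg_one]
  field_simp
  ring

theorem sigmoid_network_integral_2d_1neuron
    (w2 b1 b2 a1 a2 : ℝ) (ha1 : a1 ≠ 0) (ha2 : a2 ≠ 0) :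
    (∫ x1 in (-1 : ℝ)..1, ∫ x2 in (-1 : ℝ)..1,
        (w2 * sigmoid (a1 * x1 + a2 * x2 + b1) + b2))
      = 4 * w2 + 4 * b2 + (w2 / (a1 * a2)) *
          (Li2 (-Real.exp (a1 + a2 - b1)) - Li2 (-Real.exp (a1 - a2 - b1))
            - Li2 (-Real.exp (-a1 + a2 - b1)) + Li2 (-Real.exp (-a1 - a2 - b1))) := by
  set g : ℝ → ℝ := fun z => 2 * w2 + 2 * b2 + w2 / a2 *
    (Real.log (1 + Real.exp (-(a2 + z))) - Real.log (1 + Real.exp (-(-a2 + z))))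
  have inner (x1 : ℝ) : ∫ x2 in (-1 : ℝ)..1, (w2 * sigmoid (a1 * x1 + a2 * x2 + b1) + b2)
      = g (a1 * x1 + b1) := by
    simp_rw [show ∀ x2, a1 * x1 + a2 * x2 + b1 = a2 * x2 + (a1 * x1 + b1) from fun _ => by ring]
    exact integral_neuron_comp_mul_add w2 b2 ha2 _
  have hG (z : ℝ) : HasDerivAt (fun z => (2 * w2 + 2 * b2) * z + w2 / a2 *
      (Li2 (-Real.exp (-(a2 + z))) - Li2 (-Real.exp (-(-a2 + z))))) (g z) z :=
    ((hasDerivAt_id z).const_mul _ |>.congr_deriv (mul_one _)).add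
      ((((hasDerivAt_Li2_neg_exp_neg _).comp_const_add a2 z).sub
        ((hasDerivAt_Li2_neg_exp_neg _).comp_const_add (-a2) z)).const_mul _)
  have hg : Continuous g :=
    have hL := continuous_log_one_add_exp_neg
    continuous_const.add <| continuous_const.mul <|
      (hL.comp (continuous_const_add a2)).sub (hL.comp (continuous_const_add (-a2)))
  rw [intervalIntegral.integral_congr fun x1 _ => inner x1,
    integral_comp_mul_add_eq_of_hasDerivAt hG hg ha1]
  ring_nf
  field_simp
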